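/- Let a < 0 be a real number, let μ be a finite measure on [0,∞), and let p : [0,∞) → [0,∞) be measurable with ∫_0^∞ p(t) dt < ∞ and satisfying p(t) = e^{a t} + ∫_{[0,t]} p(t−u) dμ(u) for all t ≥ 0. Then μ([0,∞)) = 1 + 1/(a · ∫_0^∞ p(t) dt), and 0 ≤ μ([0,∞)) < 1. -/

import Mathlib

/-!
Integrate the renewal equation over `[0, ∞)`. By Tonelli and translation invariance of Lebesgue
measure the convolution term contributes `μ([0, ∞)) · P`, where `P = ∫₀^∞ p`, and the exponential
contributes `-1/a`. Hence `P = -1/a + μ([0, ∞)) · P`, and since `P` is finite (so positive) this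
solves to `μ([0, ∞)) = 1 + 1/(a P) < 1`.
-/

open MeasureTheory Set
open scoped ENNReal

lemma setLIntegral_Icc_comp_sub_eq (μ : Measure ℝ) (f : ℝ → ℝ≥0∞) (t : ℝ) :
    ∫⁻ u in Icc 0 t, f (t - u) ∂μ = ∫⁻ u in Ici 0, (Ici 0).indicator f (t - u) ∂μ := by
  have hind : ∀ u, (Ici 0).indicator f (t - u) = (Iic t).indicator (fun u => f (t - u)) u := by
    intro u
    simp [indicator_apply, sub_nonneg]
  simp_rw [hind]
  rw [lintegral_indicator measurableSet_Iic, Measure.restrict_restrict measurableSet_Iic,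
    Iic_inter_Ici]

lemma measurable_setLIntegral_Icc_comp_sub (μ : Measure ℝ) [SFinite μ] {f : ℝ → ℝ≥0∞}
    (hf : Measurable f) : Measurable fun t => ∫⁻ u in Icc 0 t, f (t - u) ∂μ := by
  simp_rw [setLIntegral_Icc_comp_sub_eq]
  exact ((hf.indicator measurableSet_Ici).comp
    (measurable_fst.sub measurable_snd)).lintegral_prod_right'

lemma setLIntegral_Ici_setLIntegral_Icc_comp_sub (μ : Measure ℝ) [SFinite μ] {f : ℝ → ℝ≥0∞}
    (hf : Measurable f) :
    ∫⁻ t in Ici 0, ∫⁻ u in Icc 0 t, f (t - u) ∂μ = μ (Ici 0) * ∫⁻ t in Ici 0, f t := by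
  have hF : Measurable fun q : ℝ × ℝ => (Ici 0).indicator f (q.1 - q.2) :=
    (hf.indicator measurableSet_Ici).comp (measurable_fst.sub measurable_snd)
  have hinner : EqOn (fun u => ∫⁻ t in Ici 0, (Ici 0).indicator f (t - u))
      (fun _ => ∫⁻ t in Ici 0, f t) (Ici 0) := by
    intro u hu
    have hsupp : (fun t => (Ici 0).indicator f (t - u)).support ⊆ Ici 0 := fun t ht =>
      hu.trans (by simpa [indicator_apply, sub_nonneg] using ht : u ≤ t ∧ _).1
    calc ∫⁻ t in Ici 0, (Ici 0).indicator f (t - u)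
        = ∫⁻ t, (Ici 0).indicator f (t - u) := setLIntegral_eq_of_support_subset hsupp
      _ = ∫⁻ t, (Ici 0).indicator f t := lintegral_sub_right_eq_self _ u
      _ = ∫⁻ t in Ici 0, f t := lintegral_indicator measurableSet_Ici _
  simp_rw [setLIntegral_Icc_comp_sub_eq]
  rw [lintegral_lintegral_swap hF.aemeasurable, setLIntegral_congr_fun measurableSet_Ici hinner,
    setLIntegral_const, mul_comm]

lemma setLIntegral_Ici_ofReal_exp_mul {a : ℝ} (ha : a < 0) :
    ∫⁻ t in Ici 0, ENNReal.ofReal (Real.exp (a * t)) = ENNReal.ofReal (-1 / a) := by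
  rw [← ofReal_integral_eq_lintegral_ofReal
      ((integrableOn_Ici_iff_integrableOn_Ioi).mpr (integrableOn_exp_mul_Ioi ha 0))
      (ae_of_all _ fun t => (Real.exp_pos _).le),
    integral_Ici_eq_integral_Ioi, integral_exp_mul_Ioi ha, mul_zero, Real.exp_zero]

lemma ofReal_integral_eq_lintegral_ofReal_of_ne_top {α : Type*} [MeasurableSpace α] {ν : Measure α}
    {q : α → ℝ} (hq : 0 ≤ᵐ[ν] q) (hqm : AEStronglyMeasurable q ν)
    (hfin : ∫⁻ x, ENNReal.ofReal (q x) ∂ν ≠ ⊤) :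
    ENNReal.ofReal (∫ x, q x ∂ν) = ∫⁻ x, ENNReal.ofReal (q x) ∂ν := by
  rw [integral_eq_lintegral_of_nonneg_ae hq hqm, ENNReal.ofReal_toReal hfin]

lemma eq_one_add_one_div_of_eq_neg_inv_add_mul {a m P : ℝ} (ha : a < 0) (hm : 0 ≤ m) (hP : 0 ≤ P)
    (h : P = -1 / a + m * P) : m = 1 + 1 / (a * P) ∧ m < 1 := by
  have hinv : 0 < -1 / a := div_pos_of_neg_of_neg (by norm_num) ha
  have hPpos : 0 < P := by nlinarith [mul_nonneg hm hP]
  have hmP : m * P = P + 1 / a := by linarith [neg_div a 1]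
  have hm_eq : m = 1 + 1 / (a * P) := by
    have : a ≠ 0 := ha.ne
    calc m = m * P / P := by field_simp
      _ = 1 + 1 / (a * P) := by rw [hmP]; field_simp
  refine ⟨hm_eq, ?_⟩
  have : 1 / (a * P) < 0 := one_div_neg.mpr (mul_neg_of_neg_of_pos ha hPpos)
  linarith

lemma setLIntegral_Ici_ofReal_eq_of_renewal {a : ℝ} (ha : a < 0) (μ : Measure ℝ) [IsFiniteMeasure μ]
    {p : ℝ → ℝ} (hp0 : ∀ t, 0 ≤ p t) (hpm : Measurable p) (hpint : IntegrableOn p (Ici 0))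
    (hp : ∀ t, 0 ≤ t → p t = Real.exp (a * t) + ∫ u in Icc 0 t, p (t - u) ∂μ) :
    ∫⁻ t in Ici 0, ENNReal.ofReal (p t) =
      ENNReal.ofReal (-1 / a) + μ (Ici 0) * ∫⁻ t in Ici 0, ENNReal.ofReal (p t) := by
  have hconv := setLIntegral_Ici_setLIntegral_Icc_comp_sub μ hpm.ennreal_ofReal
  -- Where the inner lintegral is infinite, the Bochner integral in `hp` is the junk value `0`;
  -- this happens only on a null set because the double integral is finite.
  have hfin : ∀ᵐ t ∂volume.restrict (Ici 0),
      ∫⁻ u in Icc 0 t, ENNReal.ofReal (p (t - u)) ∂μ < ⊤ :=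
    ae_lt_top (measurable_setLIntegral_Icc_comp_sub μ hpm.ennreal_ofReal)
      (hconv ▸ ENNReal.mul_ne_top (measure_ne_top _ _) hpint.lintegral_lt_top.ne)
  have hae : ∀ᵐ t ∂volume.restrict (Ici 0), ENNReal.ofReal (p t) =
      ENNReal.ofReal (Real.exp (a * t)) + ∫⁻ u in Icc 0 t, ENNReal.ofReal (p (t - u)) ∂μ := by
    filter_upwards [ae_restrict_mem measurableSet_Ici, hfin] with t ht hft
    rw [hp t ht, ENNReal.ofReal_add (Real.exp_pos _).le
        (setIntegral_nonneg measurableSet_Icc fun u _ => hp0 _),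
      ofReal_integral_eq_lintegral_ofReal_of_ne_top (ae_of_all _ fun u => hp0 _)
        (by fun_prop : Measurable fun u => p (t - u)).aestronglyMeasurable hft.ne]
  calc ∫⁻ t in Ici 0, ENNReal.ofReal (p t)
      = ∫⁻ t in Ici 0, (ENNReal.ofReal (Real.exp (a * t)) +
          ∫⁻ u in Icc 0 t, ENNReal.ofReal (p (t - u)) ∂μ) := lintegral_congr_ae hae
    _ = ENNReal.ofReal (-1 / a) + μ (Ici 0) * ∫⁻ t in Ici 0, ENNReal.ofReal (p t) := by
      rw [lintegral_add_left (by fun_prop), setLIntegral_Ici_ofReal_exp_mul ha, hconv]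

theorem total_mass_of_return_time_equation_general
    (a : ℝ) (ha : a < 0)
    (μ : Measure ℝ) [IsFiniteMeasure μ]
    (p : ℝ → ℝ) (hp0 : ∀ t, 0 ≤ p t) (hpm : Measurable p)
    (hpint : IntegrableOn p (Set.Ici (0 : ℝ)))
    (hp : ∀ t : ℝ, 0 ≤ t →
      p t = Real.exp (a * t) + ∫ u in Set.Icc (0 : ℝ) t, p (t - u) ∂μ) :
    (μ (Set.Ici 0)).toReal = 1 + 1 / (a * ∫ t in Set.Ici (0 : ℝ), p t) ∧
      0 ≤ (μ (Set.Ici 0)).toReal ∧ (μ (Set.Ici 0)).toReal < 1 := by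
  have hP : ∫⁻ t in Ici 0, ENNReal.ofReal (p t) ≠ ⊤ := hpint.lintegral_lt_top.ne
  have hmass := congrArg ENNReal.toReal
    (setLIntegral_Ici_ofReal_eq_of_renewal ha μ hp0 hpm hpint hp)
  rw [ENNReal.toReal_add ENNReal.ofReal_ne_top (ENNReal.mul_ne_top (measure_ne_top _ _) hP),
    ENNReal.toReal_mul, ENNReal.toReal_ofReal (div_pos_of_neg_of_neg (by norm_num) ha).le] at hmass
  rw [integral_eq_lintegral_of_nonneg_ae (ae_of_all _ hp0) hpm.aestronglyMeasurable]
  obtain ⟨hm_eq, hm_lt⟩ :=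
    eq_one_add_one_div_of_eq_neg_inv_add_mul ha ENNReal.toReal_nonneg ENNReal.toReal_nonneg hmass
  exact ⟨hm_eq, ENNReal.toReal_nonneg, hm_lt⟩

/-- Let `a < 0`, let `μ` be a finite measure supported on `[0,∞)`,
and let `p : [0,∞) → [0,∞)` be measurable, integrable on `[0,∞)`, satisfying the
renewal-type equation `p(t) = e^{at} + ∫_{[0,t]} p(t-u) dμ(u)` for `t ≥ 0`.
Then `μ([0,∞)) = 1 + 1/(a · ∫_0^∞ p(t) dt)` and `0 ≤ μ([0,∞)) < 1`. -/
theorem total_mass_of_return_time_equation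
    (a : ℝ) (ha : a < 0)
    (μ : Measure ℝ) [IsFiniteMeasure μ] (hsupp : μ (Set.Iio 0) = 0)
    (p : ℝ → ℝ) (hp0 : ∀ t, 0 ≤ p t) (hpm : Measurable p)
    (hpint : IntegrableOn p (Set.Ici (0 : ℝ)))
    (hp : ∀ t : ℝ, 0 ≤ t →
      p t = Real.exp (a * t) + ∫ u in Set.Icc (0 : ℝ) t, p (t - u) ∂μ) :
    (μ (Set.Ici 0)).toReal = 1 + 1 / (a * ∫ t in Set.Ici (0 : ℝ), p t) ∧
      0 ≤ (μ (Set.Ici 0)).toReal ∧ (μ (Set.Ici 0)).toReal < 1 :=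
  total_mass_of_return_time_equation_general a ha μ p hp0 hpm hpint hp
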